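/- arXiv:1711.07622 — 7 statements merged into one kernel-verified Lean document; each statement's English description precedes it below -/
import Mathlib

section
/- Let $\bm{z} \in \ell^1_{\bm{w}}(\mathbb{N})$ be a sequence with weights $w_i \geq 1$, and let $K \in \mathbb{N}$ with $K > \|\bm{w}\|_\infty^2$. Then the weighted best approximation satisfies $\inf\{\|\bm{z}-\bm{z}'\|_2 : |\mathrm{supp}(\bm{z}')|_{\bm{w}} \leq K\} \leq \|\bm{z}\|_{1,\bm{w}} / \sqrt{K - \|\bm{w}\|_\infty^2}$, where $|S|_{\bm{w}} := \sum_{i \in S} w_i^2$ and $\|\bm{z}\|_{1,\bm{w}} := \sum_i w_i |z_i|$. -/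
open scoped BigOperators

/-- **Weighted Stechkin inequality.** For a sequence `z` in weighted `ℓ¹` with weights
`w i ≥ 1` bounded by `B` (playing the role of `‖w‖_∞`), and `K > B² = ‖w‖_∞²`, there is a
support set `S` of weighted cardinality at most `K` such that the `ℓ²` error of restricting
`z` to `S` is at most `‖z‖_{1,w} / √(K - ‖w‖_∞²)`. -/
theorem weighted_stechkin (z : ℕ → ℂ) (w : ℕ → ℝ) (B : ℝ)
    (hw : ∀ i, 1 ≤ w i) (hB : ∀ i, w i ≤ B)
    (hsum : Summable (fun i => w i * ‖z i‖))
    (K : ℕ) (hK : B ^ 2 < (K : ℝ)) :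
    ∃ S : Finset ℕ, (∑ i ∈ S, (w i) ^ 2) ≤ (K : ℝ) ∧
      Real.sqrt (∑' i, (if i ∈ S then 0 else ‖z i‖ ^ 2)) ≤
        (∑' i, w i * ‖z i‖) / Real.sqrt ((K : ℝ) - B ^ 2) := by
  have hwpos : ∀ i, (0:ℝ) < w i := fun i => lt_of_lt_of_le one_pos (hw i)
  have hterm : ∀ i, (0:ℝ) ≤ w i * ‖z i‖ :=
    fun i => mul_nonneg (hwpos i).le (norm_nonneg _)
  set σ := ∑' i, w i * ‖z i‖ with hσdef
  have hσ0 : 0 ≤ σ := tsum_nonneg hterm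
  have hKpos : (0:ℝ) < K := lt_of_le_of_lt (sq_nonneg B) hK
  have hKB : (0:ℝ) < (K:ℝ) - B ^ 2 := by linarith
  rcases eq_or_lt_of_le hσ0 with h0 | hσpos
  · -- trivial case: σ = 0, so z = 0
    have hz : ∀ i, ‖z i‖ = 0 := by
      intro i
      have hle : w i * ‖z i‖ ≤ σ := Summable.le_tsum hsum i (fun j _ => hterm j)
      have : w i * ‖z i‖ = 0 := le_antisymm (h0 ▸ hle) (hterm i)
      rcases mul_eq_zero.mp this with h | h
      · exact absurd h (hwpos i).ne'
      · exact h
    refine ⟨∅, by simpa using hKpos.le, ?_⟩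
    have : (∑' i, (if i ∈ (∅ : Finset ℕ) then (0:ℝ) else ‖z i‖ ^ 2)) = 0 := by
      simp [hz]
    rw [this, Real.sqrt_zero]
    exact div_nonneg hσ0 (Real.sqrt_nonneg _)
  · -- main case
    set t := σ / K with htdef
    have ht : 0 < t := div_pos hσpos hKpos
    have hfin : {j | t * w j < ‖z j‖}.Finite := by
      have h1 : ∀ᶠ j in Filter.cofinite, w j * ‖z j‖ < t :=
        hsum.tendsto_cofinite_zero.eventually (gt_mem_nhds ht)
      have h2 : {j | ¬ (w j * ‖z j‖ < t)}.Finite := Filter.eventually_cofinite.mp h1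
      refine h2.subset ?_
      intro j hj
      simp only [Set.mem_setOf_eq, not_lt] at hj ⊢
      calc t = t * 1 := by ring
        _ ≤ t * (w j * w j) := by
            have h1j := hw j
            have : (1:ℝ) ≤ w j * w j := by nlinarith
            exact mul_le_mul_of_nonneg_left this ht.le
        _ = w j * (t * w j) := by ring
        _ ≤ w j * ‖z j‖ := by
            have := le_of_lt hj
            exact mul_le_mul_of_nonneg_left this (hwpos j).le
    refine ⟨hfin.toFinset, ?_, ?_⟩
    · -- weighted cardinality bound
      have hsum1 : ∀ i ∈ hfin.toFinset, w i ^ 2 * t ≤ w i * ‖z i‖ := by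
        intro i hi
        have hi' : t * w i < ‖z i‖ := by simpa using hi
        nlinarith [hwpos i, (norm_nonneg (z i))]
      have h3 : (∑ i ∈ hfin.toFinset, w i ^ 2) * t ≤ σ := by
        rw [Finset.sum_mul]
        calc ∑ i ∈ hfin.toFinset, w i ^ 2 * t ≤ ∑ i ∈ hfin.toFinset, w i * ‖z i‖ :=
              Finset.sum_le_sum hsum1
          _ ≤ σ := Summable.sum_le_tsum _ (fun j _ => hterm j) hsum
      have : (∑ i ∈ hfin.toFinset, w i ^ 2) * t ≤ (K:ℝ) * t := by
        have : (K:ℝ) * t = σ := by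
          rw [htdef]; field_simp
        linarith
      exact le_of_mul_le_mul_right (by linarith) ht
    · -- error bound
      have hgle : ∀ i, (if i ∈ hfin.toFinset then (0:ℝ) else ‖z i‖ ^ 2)
          ≤ t * (w i * ‖z i‖) := by
        intro i
        by_cases hi : i ∈ hfin.toFinset
        · simp only [hi, if_true]
          exact mul_nonneg ht.le (hterm i)
        · simp only [hi, if_false]
          have hi' : ¬ t * w i < ‖z i‖ := by
            simpa [hfin.mem_toFinset] using hi
          push_neg at hi'
          nlinarith [norm_nonneg (z i), hwpos i]
      have hgnn : ∀ i, (0:ℝ) ≤ (if i ∈ hfin.toFinset then (0:ℝ) else ‖z i‖ ^ 2) := by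
        intro i; split <;> positivity
      have hgsummable : Summable (fun i => (if i ∈ hfin.toFinset then (0:ℝ) else ‖z i‖ ^ 2)) :=
        Summable.of_nonneg_of_le hgnn hgle (hsum.mul_left t)
      have h4 : (∑' i, (if i ∈ hfin.toFinset then (0:ℝ) else ‖z i‖ ^ 2)) ≤ t * σ := by
        calc (∑' i, (if i ∈ hfin.toFinset then (0:ℝ) else ‖z i‖ ^ 2))
            ≤ ∑' i, t * (w i * ‖z i‖) := Summable.tsum_le_tsum hgle hgsummable (hsum.mul_left t)
          _ = t * σ := tsum_mul_left
      have h5 : t * σ ≤ σ ^ 2 / ((K:ℝ) - B ^ 2) := by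
        rw [htdef]
        rw [div_mul_eq_mul_div, div_le_div_iff₀ hKpos hKB]
        nlinarith [sq_nonneg B, hσpos]
      calc Real.sqrt (∑' i, (if i ∈ hfin.toFinset then (0:ℝ) else ‖z i‖ ^ 2))
          ≤ Real.sqrt (σ ^ 2 / ((K:ℝ) - B ^ 2)) := Real.sqrt_le_sqrt (by linarith)
        _ = σ / Real.sqrt ((K:ℝ) - B ^ 2) := by
            rw [Real.sqrt_div (sq_nonneg σ), Real.sqrt_sq hσ0]
end

section
/- The union of all lower (downward closed) subsets $S \subseteq \mathbb{N}_0^d$ of cardinality at most $s$ equals the hyperbolic cross $\Lambda^{HC}_{d,s} = \{\bm{i} \in \mathbb{N}_0^d : \prod_{\ell=1}^d (i_\ell + 1) \leq s\}$. -/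
open scoped BigOperators

/-- The union of all lower (downward closed) subsets of `ℕ₀^d` of cardinality at most `s`
equals the hyperbolic cross `Λ^{HC}_{d,s} = { i : ∏ ℓ, (i ℓ + 1) ≤ s }`. -/
theorem union_lower_sets_eq_hyperbolicCross (d s : ℕ) :
    {i : Fin d → ℕ | ∃ S : Finset (Fin d → ℕ), S.card ≤ s ∧
        (∀ a ∈ S, ∀ b : Fin d → ℕ, (∀ ℓ, b ℓ ≤ a ℓ) → b ∈ S) ∧ i ∈ S} =
      {i : Fin d → ℕ | ∏ ℓ, (i ℓ + 1) ≤ s} := by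
  ext i
  simp only [Set.mem_setOf_eq]
  constructor
  · rintro ⟨S, hcard, hlow, hi⟩
    have hsub : Fintype.piFinset (fun ℓ => Finset.range (i ℓ + 1)) ⊆ S := by
      intro b hb
      refine hlow i hi b ?_
      intro ℓ
      have := Fintype.mem_piFinset.mp hb ℓ
      exact Nat.lt_succ_iff.mp (Finset.mem_range.mp this)
    calc ∏ ℓ, (i ℓ + 1)
        = (Fintype.piFinset (fun ℓ => Finset.range (i ℓ + 1))).card := by
          rw [Fintype.card_piFinset]; simp
      _ ≤ S.card := Finset.card_le_card hsub
      _ ≤ s := hcard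
  · intro h
    refine ⟨Fintype.piFinset (fun ℓ => Finset.range (i ℓ + 1)), ?_, ?_, ?_⟩
    · rw [Fintype.card_piFinset]; simpa using h
    · intro a ha b hb
      rw [Fintype.mem_piFinset] at ha ⊢
      intro ℓ
      exact Finset.mem_range.mpr (lt_of_le_of_lt (hb ℓ) (Finset.mem_range.mp (ha ℓ)))
    · rw [Fintype.mem_piFinset]
      intro ℓ; exact Finset.mem_range.mpr (Nat.lt_succ_self _)
end

section
/- For any $d \geq 1$ and $s \geq 1$, the cardinality of the hyperbolic cross satisfies $|\Lambda^{HC}_{d,s}| \leq 2 s^3 4^d$. -/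
open scoped BigOperators

/-- The hyperbolic cross of order `s` in dimension `d`, as a finite set of multi-indices. -/
def hyperbolicCross (d s : ℕ) : Finset (Fin d → ℕ) :=
  (Fintype.piFinset fun _ : Fin d => Finset.range s).filter
    fun i => ∏ ℓ, (i ℓ + 1) ≤ s

lemma mem_hyperbolicCross_of_prod_le {d s : ℕ} {i : Fin d → ℕ}
    (h : ∏ ℓ, (i ℓ + 1) ≤ s) : i ∈ hyperbolicCross d s := by
  simp only [hyperbolicCross, Finset.mem_filter, Fintype.mem_piFinset, Finset.mem_range]
  refine ⟨fun ℓ => ?_, h⟩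
  have h1 : i ℓ + 1 ≤ ∏ ℓ, (i ℓ + 1) :=
    Finset.single_le_prod' (fun _ _ => Nat.succ_le_succ (Nat.zero_le _)) (Finset.mem_univ ℓ)
  omega

lemma sum_inv_sq_le (s : ℕ) :
    ∑ j ∈ Finset.range s, (1 : ℚ) / ((j : ℚ) + 1) ^ 2 ≤ 2 := by
  have key : ∀ j : ℕ, (1 : ℚ) / ((j : ℚ) + 1) ^ 2
      ≤ 2 * ((1 : ℚ) / ((j : ℚ) + 1) - 1 / ((j : ℚ) + 2)) := by
    intro j
    have h1 : (0 : ℚ) < (j : ℚ) + 1 := by positivity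
    have h2 : (0 : ℚ) < (j : ℚ) + 2 := by positivity
    have heq : 2 * ((1 : ℚ) / ((j : ℚ) + 1) - 1 / ((j : ℚ) + 2))
        = 2 / (((j : ℚ) + 1) * ((j : ℚ) + 2)) := by field_simp; ring
    rw [heq, div_le_div_iff₀ (by positivity) (by positivity)]
    nlinarith [sq_nonneg ((j:ℚ))]
  calc ∑ j ∈ Finset.range s, (1 : ℚ) / ((j : ℚ) + 1) ^ 2
      ≤ ∑ j ∈ Finset.range s, 2 * ((1 : ℚ) / ((j : ℚ) + 1) - 1 / ((j : ℚ) + 2)) :=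
        Finset.sum_le_sum fun j _ => key j
    _ = 2 * ∑ j ∈ Finset.range s, ((fun n : ℕ => (1 : ℚ) / ((n : ℚ) + 1)) j
          - (fun n : ℕ => (1 : ℚ) / ((n : ℚ) + 1)) (j + 1)) := by
        rw [← Finset.mul_sum]; congr 1; apply Finset.sum_congr rfl; intro j _
        push_cast; ring_nf
    _ = 2 * ((1 : ℚ) / ((0 : ℕ) + 1 : ℚ) - 1 / ((s : ℚ) + 1)) := by
        rw [Finset.sum_range_sub' (fun n : ℕ => (1 : ℚ) / ((n : ℚ) + 1))]
    _ ≤ 2 := by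
        have h0 : (0 : ℚ) ≤ 1 / ((s : ℚ) + 1) := by positivity
        push_cast
        linarith

lemma sum_div_sq_le (s : ℕ) :
    ∑ j ∈ Finset.range s, (s / (j + 1)) ^ 2 ≤ 2 * s ^ 2 := by
  have : ((∑ j ∈ Finset.range s, (s / (j + 1)) ^ 2 : ℕ) : ℚ) ≤ 2 * (s : ℚ) ^ 2 := by
    push_cast
    calc ∑ j ∈ Finset.range s, ((s / (j + 1) : ℕ) : ℚ) ^ 2
        ≤ ∑ j ∈ Finset.range s, ((s : ℚ) / ((j : ℚ) + 1)) ^ 2 := by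
          apply Finset.sum_le_sum; intro j _
          have h := Nat.cast_div_le (α := ℚ) (m := s) (n := j + 1)
          push_cast at h
          have h0 : (0 : ℚ) ≤ ((s / (j + 1) : ℕ) : ℚ) := by positivity
          exact pow_le_pow_left₀ h0 h 2
      _ = ∑ j ∈ Finset.range s, (s : ℚ) ^ 2 * (1 / ((j : ℚ) + 1) ^ 2) := by
          apply Finset.sum_congr rfl; intro j _; field_simp
      _ = (s : ℚ) ^ 2 * ∑ j ∈ Finset.range s, (1 : ℚ) / ((j : ℚ) + 1) ^ 2 := by
          rw [Finset.mul_sum]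
      _ ≤ (s : ℚ) ^ 2 * 2 := by
          exact mul_le_mul_of_nonneg_left (sum_inv_sq_le s) (by positivity)
      _ = 2 * (s : ℚ) ^ 2 := by ring
  exact_mod_cast this

lemma hyperbolicCross_zero_s (d : ℕ) : hyperbolicCross d 0 = ∅ := by
  rw [Finset.eq_empty_iff_forall_notMem]
  intro i hi
  simp only [hyperbolicCross, Finset.mem_filter] at hi
  have : 0 < ∏ ℓ, (i ℓ + 1) := Finset.prod_pos fun _ _ => Nat.succ_pos _
  omega

set_option maxHeartbeats 1000000 in
lemma hyperbolicCross_card_le (d : ℕ) : ∀ s : ℕ, (hyperbolicCross d s).card ≤ s ^ 2 * 2 ^ d := by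
  induction d with
  | zero =>
    intro s
    match s with
    | 0 => rw [hyperbolicCross_zero_s]; simp
    | s + 1 =>
      have h1 : (hyperbolicCross 0 (s+1)).card ≤ (Fintype.piFinset fun _ : Fin 0 =>
          Finset.range (s+1)).card := Finset.card_filter_le _ _
      have h2 : (Fintype.piFinset fun _ : Fin 0 => Finset.range (s+1)).card = 1 := by
        simp [Fintype.card_piFinset]
      have h3 : 0 < (s + 1) ^ 2 * 2 ^ 0 := by positivity
      omega
  | succ d ih =>
    intro s
    have hsub : hyperbolicCross (d+1) s ⊆
        (Finset.range s).biUnion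
          (fun j => (hyperbolicCross d (s / (j + 1))).image (fun v => Fin.snoc (α := fun _ => ℕ) v j)) := by
      intro i hi
      simp only [hyperbolicCross, Finset.mem_filter, Fintype.mem_piFinset,
        Finset.mem_range] at hi
      obtain ⟨hrange, hprod⟩ := hi
      set j := i (Fin.last d) with hj
      have hsplit : (∏ ℓ : Fin d, (i ℓ.castSucc + 1)) * (j + 1) ≤ s := by
        rw [← Fin.prod_univ_castSucc (f := fun ℓ => i ℓ + 1)]
        exact hprod
      have hP1 : 1 ≤ ∏ ℓ : Fin d, (i ℓ.castSucc + 1) :=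
        Finset.one_le_prod' fun _ _ => Nat.succ_le_succ (Nat.zero_le _)
      have hjlt : j < s := by nlinarith
      have hPle : (∏ ℓ : Fin d, (i ℓ.castSucc + 1)) ≤ s / (j + 1) :=
        (Nat.le_div_iff_mul_le (Nat.succ_pos j)).2 hsplit
      rw [Finset.mem_biUnion]
      refine ⟨j, Finset.mem_range.2 hjlt, ?_⟩
      rw [Finset.mem_image]
      refine ⟨Fin.init i, ?_, Fin.snoc_init_self i⟩
      apply mem_hyperbolicCross_of_prod_le
      calc ∏ ℓ : Fin d, (Fin.init i ℓ + 1) = ∏ ℓ : Fin d, (i ℓ.castSucc + 1) := by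
            apply Finset.prod_congr rfl; intro ℓ _; rfl
        _ ≤ s / (j + 1) := hPle
    calc (hyperbolicCross (d+1) s).card
        ≤ ((Finset.range s).biUnion
            (fun j => (hyperbolicCross d (s / (j + 1))).image (fun v => Fin.snoc (α := fun _ => ℕ) v j))).card :=
          Finset.card_le_card hsub
      _ ≤ ∑ j ∈ Finset.range s,
            ((hyperbolicCross d (s / (j + 1))).image (fun v => Fin.snoc (α := fun _ => ℕ) v j)).card :=
          Finset.card_biUnion_le
      _ ≤ ∑ j ∈ Finset.range s, (hyperbolicCross d (s / (j + 1))).card :=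
          Finset.sum_le_sum fun j _ => Finset.card_image_le
      _ ≤ ∑ j ∈ Finset.range s, (s / (j + 1)) ^ 2 * 2 ^ d :=
          Finset.sum_le_sum fun j _ => ih (s / (j + 1))
      _ = (∑ j ∈ Finset.range s, (s / (j + 1)) ^ 2) * 2 ^ d := by rw [Finset.sum_mul]
      _ ≤ (2 * s ^ 2) * 2 ^ d := Nat.mul_le_mul_right _ (sum_div_sq_le s)
      _ = s ^ 2 * 2 ^ (d + 1) := by ring

/-- Cardinality bound `|Λ^{HC}_{d,s}| ≤ 2 s³ 4^d`. -/
theorem hyperbolicCross_card_le_two_s_cubed (d s : ℕ) (hd : 1 ≤ d) (hs : 1 ≤ s) :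
    (hyperbolicCross d s).card ≤ 2 * s ^ 3 * 4 ^ d := by
  calc (hyperbolicCross d s).card ≤ s ^ 2 * 2 ^ d := hyperbolicCross_card_le d s
    _ ≤ 2 * s ^ 3 * 4 ^ d := by
      have h1 : s ^ 2 ≤ s ^ 3 := Nat.pow_le_pow_right hs (by norm_num)
      have h2 : 2 ^ d ≤ 4 ^ d := Nat.pow_le_pow_left (by norm_num) d
      calc s ^ 2 * 2 ^ d ≤ s ^ 3 * 4 ^ d := Nat.mul_le_mul h1 h2
        _ ≤ 2 * s ^ 3 * 4 ^ d := by
          rw [mul_assoc]; exact Nat.le_mul_of_pos_left _ (by norm_num)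
end

section
/- Suppose a matrix $A \in \mathbb{C}^{m\times n}$ satisfies the weighted robust null space property of order $K$ with constants $0 < \rho < 1$ and $\tau > 0$ relative to weights $\bm{w}$: for all $\bm{z} \in \mathbb{C}^n$ and all $S \subseteq [n]$ with $|S|_{\bm{w}} \leq K$, $\|\bm{z}_S\|_2 \leq \frac{\rho}{\sqrt{K}}\|\bm{z}_{S^c}\|_{1,\bm{w}} + \tau\|A\bm{z}\|_2$. Then for every $\bm{z}, \hat{\bm{z}} \in \mathbb{C}^n$, $\|\bm{z}-\hat{\bm{z}}\|_{1,\bm{w}} \leq \frac{1+\rho}{1-\rho}\big(2\sigma_K(\bm{z})_{1,\bm{w}} + \|\hat{\bm{z}}\|_{1,\bm{w}} - \|\bm{z}\|_{1,\bm{w}}\big) + \frac{2\tau\sqrt{K}}{1-\rho}\|A(\hat{\bm{z}}-\bm{z})\|_2$, where $\sigma_K(\bm{z})_{1,\bm{w}} = \min\{\|\bm{z}-\bm{z}'\|_{1,\bm{w}} : |\mathrm{supp}(\bm{z}')|_{\bm{w}} \leq K\}$. -/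
open scoped BigOperators

/-- Weighted `ℓ¹` norm `‖z‖_{1,w} = ∑ i, w i * |z i|`. -/
noncomputable def wnorm1 {n : ℕ} (w : Fin n → ℝ) (z : Fin n → ℂ) : ℝ :=
  ∑ i, w i * ‖z i‖

/-- Euclidean norm of a complex vector. -/
noncomputable def enorm2 {m : ℕ} (y : Fin m → ℂ) : ℝ :=
  Real.sqrt (∑ i, ‖y i‖ ^ 2)

/-- Weighted best `K`-term (weighted cardinality) approximation error
`σ_K(z)_{1,w} = min { ‖z - z'‖_{1,w} : |supp z'|_w ≤ K }`. -/
noncomputable def sigmaK {n : ℕ} (w : Fin n → ℝ) (K : ℝ) (z : Fin n → ℂ) : ℝ :=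
  sInf {t : ℝ | ∃ S : Finset (Fin n),
    (∑ i ∈ S, (w i) ^ 2) ≤ K ∧ t = ∑ i ∈ Sᶜ, w i * ‖z i‖}

lemma sigmaK_attained {n : ℕ} (w : Fin n → ℝ) (K : ℝ) (hK : 0 < K) (z : Fin n → ℂ) :
    ∃ S : Finset (Fin n), (∑ i ∈ S, (w i) ^ 2) ≤ K ∧
      sigmaK w K z = ∑ i ∈ Sᶜ, w i * ‖z i‖ := by
  have hset : {t : ℝ | ∃ S : Finset (Fin n),
      (∑ i ∈ S, (w i) ^ 2) ≤ K ∧ t = ∑ i ∈ Sᶜ, w i * ‖z i‖} =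
      (fun S : Finset (Fin n) => ∑ i ∈ Sᶜ, w i * ‖z i‖) ''
        {S | (∑ i ∈ S, (w i) ^ 2) ≤ K} := by
    ext t
    simp only [Set.mem_setOf_eq, Set.mem_image]
    constructor
    · rintro ⟨S, hS, ht⟩; exact ⟨S, hS, ht.symm⟩
    · rintro ⟨S, hS, ht⟩; exact ⟨S, hS, ht.symm⟩
  have hfin : ({t : ℝ | ∃ S : Finset (Fin n),
      (∑ i ∈ S, (w i) ^ 2) ≤ K ∧ t = ∑ i ∈ Sᶜ, w i * ‖z i‖}).Finite := by
    rw [hset]; exact (Set.toFinite _).image _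
  have hne : ({t : ℝ | ∃ S : Finset (Fin n),
      (∑ i ∈ S, (w i) ^ 2) ≤ K ∧ t = ∑ i ∈ Sᶜ, w i * ‖z i‖}).Nonempty := by
    refine ⟨∑ i ∈ (∅ : Finset (Fin n))ᶜ, w i * ‖z i‖, ⟨∅, ?_, rfl⟩⟩
    simp [hK.le]
  have := hne.csInf_mem hfin
  obtain ⟨S, hS, ht⟩ := this
  exact ⟨S, hS, ht⟩

lemma enorm2_neg {m : ℕ} (y : Fin m → ℂ) : enorm2 (-y) = enorm2 y := by
  unfold enorm2; simp

/-- Weighted `ℓ¹` distance bound under the weighted robust null space property of order `K`. -/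
theorem wrnsp_distance_bound {m n : ℕ} (A : Matrix (Fin m) (Fin n) ℂ)
    (w : Fin n → ℝ) (hw : ∀ i, 0 < w i) (K ρ τ : ℝ)
    (hK : 0 < K) (hρ : 0 < ρ) (hρ1 : ρ < 1) (hτ : 0 < τ)
    (hNSP : ∀ z : Fin n → ℂ, ∀ S : Finset (Fin n), (∑ i ∈ S, (w i) ^ 2) ≤ K →
      Real.sqrt (∑ i ∈ S, ‖z i‖ ^ 2) ≤
        ρ / Real.sqrt K * (∑ i ∈ Sᶜ, w i * ‖z i‖) + τ * enorm2 (A.mulVec z))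
    (z zh : Fin n → ℂ) :
    wnorm1 w (z - zh) ≤
      (1 + ρ) / (1 - ρ) * (2 * sigmaK w K z + wnorm1 w zh - wnorm1 w z)
        + 2 * τ * Real.sqrt K / (1 - ρ) * enorm2 (A.mulVec (zh - z)) := by
  obtain ⟨S, hS, hσ⟩ := sigmaK_attained w K hK z
  set v : Fin n → ℂ := z - zh with hv
  have hN : enorm2 (A.mulVec (zh - z)) = enorm2 (A.mulVec v) := by
    have : zh - z = -v := by rw [hv]; abel
    rw [this, Matrix.mulVec_neg, enorm2_neg]
  set N := enorm2 (A.mulVec v) with hNdef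
  set a := ∑ i ∈ S, w i * ‖v i‖ with ha
  set b := ∑ i ∈ Sᶜ, w i * ‖v i‖ with hb
  have hsqrtK : (0:ℝ) < Real.sqrt K := Real.sqrt_pos.mpr hK
  -- weighted Cauchy-Schwarz
  have hCS : a ≤ Real.sqrt K * Real.sqrt (∑ i ∈ S, ‖v i‖ ^ 2) := by
    have h1 : a ≤ Real.sqrt (∑ i ∈ S, (w i) ^ 2) * Real.sqrt (∑ i ∈ S, ‖v i‖ ^ 2) := by
      calc a ≤ Real.sqrt ((∑ i ∈ S, (w i) ^ 2) * ∑ i ∈ S, ‖v i‖ ^ 2) := by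
              refine (Real.le_sqrt (Finset.sum_nonneg fun i _ =>
                  mul_nonneg (hw i).le (norm_nonneg _))
                (mul_nonneg (Finset.sum_nonneg fun i _ => sq_nonneg _)
                  (Finset.sum_nonneg fun i _ => sq_nonneg _))).mpr ?_
              exact Finset.sum_mul_sq_le_sq_mul_sq S (fun i => w i) (fun i => ‖v i‖)
        _ = Real.sqrt (∑ i ∈ S, (w i) ^ 2) * Real.sqrt (∑ i ∈ S, ‖v i‖ ^ 2) :=
              Real.sqrt_mul (Finset.sum_nonneg fun i _ => sq_nonneg _) _
    refine h1.trans (mul_le_mul_of_nonneg_right ?_ (Real.sqrt_nonneg _))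
    exact Real.sqrt_le_sqrt hS
  have hNSPv := hNSP v S hS
  have step1 : a ≤ ρ * b + τ * Real.sqrt K * N := by
    have := mul_le_mul_of_nonneg_left hNSPv hsqrtK.le
    have heq : Real.sqrt K * (ρ / Real.sqrt K * b + τ * N) = ρ * b + τ * Real.sqrt K * N := by
      field_simp
    calc a ≤ Real.sqrt K * Real.sqrt (∑ i ∈ S, ‖v i‖ ^ 2) := hCS
      _ ≤ Real.sqrt K * (ρ / Real.sqrt K * b + τ * N) := this
      _ = ρ * b + τ * Real.sqrt K * N := heq
  -- Step 2: cone-type inequality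
  have hzsplit : wnorm1 w z = (∑ i ∈ S, w i * ‖z i‖) + ∑ i ∈ Sᶜ, w i * ‖z i‖ :=
    (Finset.sum_add_sum_compl S _).symm
  have hzhsplit : wnorm1 w zh = (∑ i ∈ S, w i * ‖zh i‖) + ∑ i ∈ Sᶜ, w i * ‖zh i‖ :=
    (Finset.sum_add_sum_compl S _).symm
  have hvsplit : wnorm1 w v = a + b := (Finset.sum_add_sum_compl S _).symm
  have hScbound : b - (∑ i ∈ Sᶜ, w i * ‖z i‖) ≤ ∑ i ∈ Sᶜ, w i * ‖zh i‖ := by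
    rw [← Finset.sum_sub_distrib]
    refine Finset.sum_le_sum fun i _ => ?_
    rw [← mul_sub]
    refine mul_le_mul_of_nonneg_left ?_ (hw i).le
    calc ‖v i‖ - ‖z i‖ ≤ ‖v i - z i‖ := norm_sub_norm_le _ _
      _ = ‖zh i‖ := by
          show ‖z i - zh i - z i‖ = _
          rw [show z i - zh i - z i = -zh i by ring, norm_neg]
  have hSbound : (∑ i ∈ S, w i * ‖z i‖) - a ≤ ∑ i ∈ S, w i * ‖zh i‖ := by
    rw [← Finset.sum_sub_distrib]
    refine Finset.sum_le_sum fun i _ => ?_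
    rw [← mul_sub]
    refine mul_le_mul_of_nonneg_left ?_ (hw i).le
    calc ‖z i‖ - ‖v i‖ ≤ ‖z i - v i‖ := norm_sub_norm_le _ _
      _ = ‖zh i‖ := by congr 1; show z i - (z i - zh i) = zh i; ring
  set D := 2 * sigmaK w K z + wnorm1 w zh - wnorm1 w z with hD
  have step2 : b ≤ D + a := by
    rw [hD, hσ]
    linarith [hScbound, hSbound, hzsplit, hzhsplit]
  have hpos : (0:ℝ) < 1 - ρ := by linarith
  have key : (1 - ρ) * (a + b) ≤ (1 + ρ) * D + 2 * (τ * Real.sqrt K * N) := by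
    nlinarith [step1, step2, hpos]
  rw [hvsplit, hN]
  rw [div_mul_eq_mul_div, div_mul_eq_mul_div, ← add_div, le_div_iff₀ hpos]
  nlinarith [key]
end

section
/- Suppose a matrix $M \in \mathbb{C}^{m\times(n+p)}$ satisfies the 2-level weighted robust null space property of order $\bm{J} = (J_1, J_2)$ with scale $\lambda > 0$ and constants $0 < \rho < 1$, $\tau > 0$: for every $\bm{z} \in \mathbb{C}^{n+p}$ and every $S_1 \subseteq [n]$, $S_2 \subseteq n+[p]$ with $|S_1|_{\bm{w}_1} \leq J_1$ and $|S_2|_{\bm{w}_2} \leq J_2$, one has $\|\bm{z}_{S_1\cup S_2}\|_2 \leq \frac{\rho}{\sqrt{J_\lambda}}\|\bm{z}_{(S_1\cup S_2)^c}\|_{1,\bm{w}_\lambda} + \tau\|M\bm{z}\|_2$ where $J_\lambda = J_1 + \lambda^2 J_2$ and $\bm{w}_\lambda = (\bm{w}_1, \lambda\bm{w}_2)$. Then for every $\bm{z}, \hat{\bm{z}} \in \mathbb{C}^{n+p}$: $\|\bm{z}-\hat{\bm{z}}\|_{1,\bm{w}_\lambda} \leq \frac{1+\rho}{1-\rho}\big(2\sigma_{\bm{J}}(\bm{z})_{1,\bm{w}_\lambda}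 + \|\hat{\bm{z}}\|_{1,\bm{w}_\lambda} - \|\bm{z}\|_{1,\bm{w}_\lambda}\big) + \frac{2\tau\sqrt{J_\lambda}}{1-\rho}\|M(\bm{z}-\hat{\bm{z}})\|_2$. -/
open scoped BigOperators

/-- Scaled weights `w_λ = (w₁, λ w₂)` on a two-block index set. -/
noncomputable def scaledWeights {n p : ℕ} (w1 : Fin n → ℝ) (w2 : Fin p → ℝ) (lam : ℝ) :
    Fin n ⊕ Fin p → ℝ :=
  Sum.elim w1 (fun j => lam * w2 j)

/-- Weighted `ℓ¹` norm with respect to scaled weights. -/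
noncomputable def wnorm1Scaled {n p : ℕ} (w1 : Fin n → ℝ) (w2 : Fin p → ℝ) (lam : ℝ)
    (z : Fin n ⊕ Fin p → ℂ) : ℝ :=
  ∑ i, scaledWeights w1 w2 lam i * ‖z i‖

/-- Best 2-level weighted `J`-term approximation error
`σ_J(z)_{1,w_λ} = inf { ‖z - z'‖_{1,w_λ} : |supp z'ᵢ|_{wᵢ} ≤ Jᵢ, i = 1,2 }`. -/
noncomputable def sigmaJ {n p : ℕ} (w1 : Fin n → ℝ) (w2 : Fin p → ℝ) (lam J1 J2 : ℝ)
    (z : Fin n ⊕ Fin p → ℂ) : ℝ :=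
  sInf {t : ℝ | ∃ (S1 : Finset (Fin n)) (S2 : Finset (Fin p)),
    (∑ i ∈ S1, (w1 i) ^ 2) ≤ J1 ∧ (∑ j ∈ S2, (w2 j) ^ 2) ≤ J2 ∧
    t = (∑ i ∈ S1ᶜ, w1 i * ‖z (Sum.inl i)‖) + lam * ∑ j ∈ S2ᶜ, w2 j * ‖z (Sum.inr j)‖}

/-!
Fix admissible supports `S₁, S₂`, put `S = S₁ ⊔ S₂` and `v = z - ẑ`. Cauchy–Schwarz together
with `|S|_{w_λ} ≤ J_λ` turns the null space property into its `ℓ¹` form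
`‖v_S‖_{1,w_λ} ≤ ρ ‖v_{Sᶜ}‖_{1,w_λ} + τ √J_λ ‖M v‖₂`, while the triangle inequality on `S` and
on `Sᶜ` gives `‖v_{Sᶜ}‖ ≤ ‖ẑ‖ - ‖z‖ + 2 ‖z_{Sᶜ}‖ + ‖v_S‖`. Eliminating `‖v_S‖` and `‖v_{Sᶜ}‖`
bounds `‖v‖_{1,w_λ}` with `‖z_{Sᶜ}‖_{1,w_λ}` in place of `σ_J(z)`; then take the infimum over
`(S₁, S₂)`.
-/

open Finset

theorem le_mul_csInf_add {s : Set ℝ} {a b c : ℝ} (hs : s.Nonempty) (hc : 0 < c)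
    (h : ∀ t ∈ s, a ≤ c * t + b) : a ≤ c * sInf s + b := by
  have hdiv : (a - b) / c ≤ sInf s :=
    le_csInf hs fun t ht => by rw [div_le_iff₀ hc]; linarith [h t ht]
  rw [div_le_iff₀ hc] at hdiv
  linarith

theorem add_le_of_le_mul_add_of_le_add {H T D η ρ : ℝ} (hρ0 : 0 ≤ ρ) (hρ1 : ρ < 1)
    (hH : H ≤ ρ * T + η) (hT : T ≤ D + H) :
    H + T ≤ (1 + ρ) / (1 - ρ) * D + 2 * η / (1 - ρ) := by
  rw [div_mul_eq_mul_div, ← add_div, le_div_iff₀ (by linarith)]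
  nlinarith

theorem Finset.compl_disjSum {α β : Type*} [Fintype α] [Fintype β] [DecidableEq α]
    [DecidableEq β] (s : Finset α) (t : Finset β) : (s.disjSum t)ᶜ = sᶜ.disjSum tᶜ := by
  ext (i | j) <;> simp

section WeightedL1

variable {ι E : Type*} [SeminormedAddCommGroup E] {w : ι → ℝ}

theorem sum_mul_norm_le_of_sqrt_sum_sq_le (S : Finset ι) (x : ι → E) {J ρ T η : ℝ}
    (hJ : 0 < J) (hwS : ∑ i ∈ S, w i ^ 2 ≤ J)
    (h : √(∑ i ∈ S, ‖x i‖ ^ 2) ≤ ρ / √J * T + η) :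
    ∑ i ∈ S, w i * ‖x i‖ ≤ ρ * T + √J * η :=
  calc ∑ i ∈ S, w i * ‖x i‖ ≤ √(∑ i ∈ S, w i ^ 2) * √(∑ i ∈ S, ‖x i‖ ^ 2) :=
        Real.sum_mul_le_sqrt_mul_sqrt S w fun i => ‖x i‖
    _ ≤ √J * (ρ / √J * T + η) := by gcongr
    _ = ρ * T + √J * η := by field_simp

variable [Fintype ι] [DecidableEq ι]

theorem sum_compl_mul_norm_sub_le (hw : ∀ i, 0 ≤ w i) (S : Finset ι) (z zh : ι → E) :
    ∑ i ∈ Sᶜ, w i * ‖(z - zh) i‖ ≤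
      ∑ i, w i * ‖zh i‖ - ∑ i, w i * ‖z i‖ + 2 * ∑ i ∈ Sᶜ, w i * ‖z i‖ +
        ∑ i ∈ S, w i * ‖(z - zh) i‖ := by
  have hS : ∑ i ∈ S, w i * ‖z i‖ ≤ ∑ i ∈ S, w i * ‖zh i‖ + ∑ i ∈ S, w i * ‖(z - zh) i‖ := by
    rw [← sum_add_distrib]
    gcongr with i
    rw [← mul_add]
    exact mul_le_mul_of_nonneg_left (norm_le_norm_add_norm_sub' _ _) (hw i)
  have hSc : ∑ i ∈ Sᶜ, w i * ‖(z - zh) i‖ ≤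
      ∑ i ∈ Sᶜ, w i * ‖zh i‖ + ∑ i ∈ Sᶜ, w i * ‖z i‖ := by
    rw [← sum_add_distrib]
    gcongr with i
    rw [← mul_add, add_comm]
    exact mul_le_mul_of_nonneg_left (norm_sub_le _ _) (hw i)
  linarith [sum_add_sum_compl S fun i => w i * ‖z i‖, sum_add_sum_compl S fun i => w i * ‖zh i‖]

theorem sum_mul_norm_sub_le_of_robust_nsp (hw : ∀ i, 0 ≤ w i) {ρ η : ℝ} (hρ0 : 0 ≤ ρ)
    (hρ1 : ρ < 1) (S : Finset ι) (z zh : ι → E)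
    (hS : ∑ i ∈ S, w i * ‖(z - zh) i‖ ≤ ρ * ∑ i ∈ Sᶜ, w i * ‖(z - zh) i‖ + η) :
    ∑ i, w i * ‖(z - zh) i‖ ≤
      (1 + ρ) / (1 - ρ) *
          (∑ i, w i * ‖zh i‖ - ∑ i, w i * ‖z i‖ + 2 * ∑ i ∈ Sᶜ, w i * ‖z i‖) +
        2 * η / (1 - ρ) := by
  rw [← sum_add_sum_compl S]
  exact add_le_of_le_mul_add_of_le_add hρ0 hρ1 hS
    (by linarith [sum_compl_mul_norm_sub_le hw S z zh])

end WeightedL1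

section TwoLevel

variable {n p : ℕ} (w1 : Fin n → ℝ) (w2 : Fin p → ℝ) (lam : ℝ)

theorem sum_disjSum_scaledWeights_mul (S1 : Finset (Fin n)) (S2 : Finset (Fin p))
    (f : Fin n ⊕ Fin p → ℝ) :
    ∑ k ∈ S1.disjSum S2, scaledWeights w1 w2 lam k * f k =
      ∑ i ∈ S1, w1 i * f (Sum.inl i) + lam * ∑ j ∈ S2, w2 j * f (Sum.inr j) := by
  simp [sum_disjSum, scaledWeights, mul_sum, mul_assoc]

theorem scaledWeights_nonneg (hw1 : ∀ i, 0 ≤ w1 i) (hw2 : ∀ j, 0 ≤ w2 j) (hlam : 0 ≤ lam) :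
    ∀ k, 0 ≤ scaledWeights w1 w2 lam k :=
  Sum.rec hw1 fun j => mul_nonneg hlam (hw2 j)

theorem sum_disjSum_scaledWeights_sq_le {S1 : Finset (Fin n)} {S2 : Finset (Fin p)} {J1 J2 : ℝ}
    (hS1 : ∑ i ∈ S1, w1 i ^ 2 ≤ J1) (hS2 : ∑ j ∈ S2, w2 j ^ 2 ≤ J2) :
    ∑ k ∈ S1.disjSum S2, scaledWeights w1 w2 lam k ^ 2 ≤ J1 + lam ^ 2 * J2 := by
  simp only [sum_disjSum, scaledWeights, Sum.elim_inl, Sum.elim_inr, mul_pow, ← mul_sum]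
  exact add_le_add hS1 (mul_le_mul_of_nonneg_left hS2 (sq_nonneg lam))

end TwoLevel

theorem two_level_wrnsp_distance_bound_general {m n p : ℕ}
    (M : Matrix (Fin m) (Fin n ⊕ Fin p) ℂ)
    (w1 : Fin n → ℝ) (w2 : Fin p → ℝ)
    (hw1 : ∀ i, 0 < w1 i) (hw2 : ∀ j, 0 < w2 j)
    (J1 J2 lam ρ τ : ℝ) (hJ1 : 0 < J1) (hJ2 : 0 < J2) (hlam : 0 < lam)
    (hρ : 0 < ρ) (hρ1 : ρ < 1)
    (hNSP : ∀ z : Fin n ⊕ Fin p → ℂ, ∀ S1 : Finset (Fin n), ∀ S2 : Finset (Fin p),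
      (∑ i ∈ S1, (w1 i) ^ 2) ≤ J1 → (∑ j ∈ S2, (w2 j) ^ 2) ≤ J2 →
      Real.sqrt ((∑ i ∈ S1, ‖z (Sum.inl i)‖ ^ 2) + ∑ j ∈ S2, ‖z (Sum.inr j)‖ ^ 2) ≤
        ρ / Real.sqrt (J1 + lam ^ 2 * J2) *
            ((∑ i ∈ S1ᶜ, w1 i * ‖z (Sum.inl i)‖) + lam * ∑ j ∈ S2ᶜ, w2 j * ‖z (Sum.inr j)‖)
          + τ * Real.sqrt (∑ k, ‖(M.mulVec z) k‖ ^ 2))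
    (z zh : Fin n ⊕ Fin p → ℂ) :
    wnorm1Scaled w1 w2 lam (z - zh) ≤
      (1 + ρ) / (1 - ρ) *
          (2 * sigmaJ w1 w2 lam J1 J2 z + wnorm1Scaled w1 w2 lam zh - wnorm1Scaled w1 w2 lam z)
        + 2 * τ * Real.sqrt (J1 + lam ^ 2 * J2) / (1 - ρ) *
            Real.sqrt (∑ k, ‖(M.mulVec (z - zh)) k‖ ^ 2) := by
  set J := J1 + lam ^ 2 * J2
  set A := (1 + ρ) / (1 - ρ)
  set η := τ * √(∑ k, ‖(M.mulVec (z - zh)) k‖ ^ 2)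
  set b := A * (wnorm1Scaled w1 w2 lam zh - wnorm1Scaled w1 w2 lam z) + 2 * (√J * η) / (1 - ρ)
  have hJ : 0 < J := by positivity
  have hA : 0 < A := div_pos (by linarith) (by linarith)
  have hsupport : ∀ (S1 : Finset (Fin n)) (S2 : Finset (Fin p)),
      ∑ i ∈ S1, w1 i ^ 2 ≤ J1 → ∑ j ∈ S2, w2 j ^ 2 ≤ J2 →
      wnorm1Scaled w1 w2 lam (z - zh) ≤ 2 * A *
        ((∑ i ∈ S1ᶜ, w1 i * ‖z (Sum.inl i)‖) + lam * ∑ j ∈ S2ᶜ, w2 j * ‖z (Sum.inr j)‖) + b := by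
    intro S1 S2 hS1 hS2
    set S := S1.disjSum S2
    have hNSPv : √(∑ k ∈ S, ‖(z - zh) k‖ ^ 2) ≤
        ρ / √J * ∑ k ∈ Sᶜ, scaledWeights w1 w2 lam k * ‖(z - zh) k‖ + η := by
      rw [compl_disjSum, sum_disjSum_scaledWeights_mul, sum_disjSum]
      exact hNSP (z - zh) S1 S2 hS1 hS2
    have hS := sum_mul_norm_le_of_sqrt_sum_sq_le S (z - zh) hJ
      (sum_disjSum_scaledWeights_sq_le w1 w2 lam hS1 hS2) hNSPv
    have hbound := sum_mul_norm_sub_le_of_robust_nsp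
      (scaledWeights_nonneg w1 w2 lam (fun i => (hw1 i).le) (fun j => (hw2 j).le) hlam.le)
      hρ.le hρ1 S z zh hS
    rw [compl_disjSum, sum_disjSum_scaledWeights_mul] at hbound
    simp only [b, A, wnorm1Scaled]
    linarith
  calc wnorm1Scaled w1 w2 lam (z - zh) ≤ 2 * A * sigmaJ w1 w2 lam J1 J2 z + b :=
        le_mul_csInf_add ⟨_, ∅, ∅, by simpa using hJ1.le, by simpa using hJ2.le, rfl⟩
          (by positivity) fun _ ⟨S1, S2, hS1, hS2, ht⟩ => ht ▸ hsupport S1 S2 hS1 hS2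
    _ = _ := by ring

/-- 2-level weighted `ℓ¹` distance bound under the 2-level weighted robust null space
property of order `J = (J₁, J₂)` with scale `λ`. -/
theorem two_level_wrnsp_distance_bound {m n p : ℕ}
    (M : Matrix (Fin m) (Fin n ⊕ Fin p) ℂ)
    (w1 : Fin n → ℝ) (w2 : Fin p → ℝ)
    (hw1 : ∀ i, 0 < w1 i) (hw2 : ∀ j, 0 < w2 j)
    (J1 J2 lam ρ τ : ℝ) (hJ1 : 0 < J1) (hJ2 : 0 < J2) (hlam : 0 < lam)
    (hρ : 0 < ρ) (hρ1 : ρ < 1) (hτ : 0 < τ)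
    (hNSP : ∀ z : Fin n ⊕ Fin p → ℂ, ∀ S1 : Finset (Fin n), ∀ S2 : Finset (Fin p),
      (∑ i ∈ S1, (w1 i) ^ 2) ≤ J1 → (∑ j ∈ S2, (w2 j) ^ 2) ≤ J2 →
      Real.sqrt ((∑ i ∈ S1, ‖z (Sum.inl i)‖ ^ 2) + ∑ j ∈ S2, ‖z (Sum.inr j)‖ ^ 2) ≤
        ρ / Real.sqrt (J1 + lam ^ 2 * J2) *
            ((∑ i ∈ S1ᶜ, w1 i * ‖z (Sum.inl i)‖) + lam * ∑ j ∈ S2ᶜ, w2 j * ‖z (Sum.inr j)‖)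
          + τ * Real.sqrt (∑ k, ‖(M.mulVec z) k‖ ^ 2))
    (z zh : Fin n ⊕ Fin p → ℂ) :
    wnorm1Scaled w1 w2 lam (z - zh) ≤
      (1 + ρ) / (1 - ρ) *
          (2 * sigmaJ w1 w2 lam J1 J2 z + wnorm1Scaled w1 w2 lam zh - wnorm1Scaled w1 w2 lam z)
        + 2 * τ * Real.sqrt (J1 + lam ^ 2 * J2) / (1 - ρ) *
            Real.sqrt (∑ k, ‖(M.mulVec (z - zh)) k‖ ^ 2) :=
  two_level_wrnsp_distance_bound_general M w1 w2 hw1 hw2 J1 J2 lam ρ τ hJ1 hJ2 hlam hρ hρ1 hNSP z zh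
end

section
/- Suppose $A \in \mathbb{C}^{m\times n}$ has the lower robust null space property of order $s$ with constants $0 < \rho < 1$ and $\tau > 0$ relative to intrinsic weights $\bm{u}$ with $\|\bm{u}_\Lambda\|_\infty^2 \leq \frac{3}{4}K(s)$. Then for any two vectors $\bm{x}_\Lambda, \hat{\bm{x}}_\Lambda \in \mathbb{C}^n$: $\|\bm{x}_\Lambda - \hat{\bm{x}}_\Lambda\|_2 \leq \frac{2+\rho}{\sqrt{K(s)}}\|\bm{x}_\Lambda - \hat{\bm{x}}_\Lambda\|_{1,\bm{u}} + \tau\|A(\bm{x}_\Lambda - \hat{\bm{x}}_\Lambda)\|_2$. -/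
open scoped BigOperators

private lemma sqrt_add_le' {a b : ℝ} (ha : 0 ≤ a) (hb : 0 ≤ b) :
    Real.sqrt (a + b) ≤ Real.sqrt a + Real.sqrt b := by
  have h1 := Real.sq_sqrt ha
  have h2 := Real.sq_sqrt hb
  have h3 := Real.sqrt_nonneg a
  have h4 := Real.sqrt_nonneg b
  have : a + b ≤ (Real.sqrt a + Real.sqrt b) ^ 2 := by nlinarith
  calc Real.sqrt (a + b) ≤ Real.sqrt ((Real.sqrt a + Real.sqrt b) ^ 2) :=
        Real.sqrt_le_sqrt this
    _ = Real.sqrt a + Real.sqrt b := Real.sqrt_sq (by positivity)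

/-- `ℓ¹_u → ℓ²` estimate conversion under the (lower/weighted) robust null space property
of order `s` with weighted sparsity `K = K(s)` and intrinsic weights with
`‖u‖_∞² ≤ (3/4) K`. -/
theorem l1u_to_l2_conversion {m n : ℕ} (A : Matrix (Fin m) (Fin n) ℂ)
    (u : Fin n → ℝ) (hu : ∀ i, 1 ≤ u i) (K ρ τ : ℝ)
    (hK : 0 < K) (hρ : 0 < ρ) (hρ1 : ρ < 1) (hτ : 0 < τ)
    (hsup : ∀ i, (u i) ^ 2 ≤ 3 / 4 * K)
    (hNSP : ∀ z : Fin n → ℂ, ∀ S : Finset (Fin n), (∑ i ∈ S, (u i) ^ 2) ≤ K →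
      Real.sqrt (∑ i ∈ S, ‖z i‖ ^ 2) ≤
        ρ / Real.sqrt K * (∑ i ∈ Sᶜ, u i * ‖z i‖)
          + τ * Real.sqrt (∑ k, ‖(A.mulVec z) k‖ ^ 2))
    (x xh : Fin n → ℂ) :
    Real.sqrt (∑ i, ‖x i - xh i‖ ^ 2) ≤
      (2 + ρ) / Real.sqrt K * (∑ i, u i * ‖x i - xh i‖)
        + τ * Real.sqrt (∑ k, ‖(A.mulVec (x - xh)) k‖ ^ 2) := by
  set z : Fin n → ℂ := x - xh with hzdef
  have hzi : ∀ i, x i - xh i = z i := fun i => rfl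
  simp only [hzi]
  set T : ℝ := ∑ i, u i * ‖z i‖ with hTdef
  have hui : ∀ i, 0 < u i := fun i => lt_of_lt_of_le one_pos (hu i)
  have hT0 : 0 ≤ T := Finset.sum_nonneg fun i _ =>
    mul_nonneg (hui i).le (norm_nonneg _)
  have hsqK : 0 < Real.sqrt K := Real.sqrt_pos.mpr hK
  rcases eq_or_lt_of_le hT0 with h0 | hTpos
  · -- T = 0 : all z i = 0
    have hz0 : ∀ i ∈ Finset.univ, u i * ‖z i‖ = 0 := by
      intro i _
      have := (Finset.sum_eq_zero_iff_of_nonneg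
        (fun i _ => mul_nonneg (hui i).le (norm_nonneg _))).1 h0.symm
      exact this i (Finset.mem_univ i)
    have hz0' : ∀ i, ‖z i‖ = 0 := by
      intro i
      have := hz0 i (Finset.mem_univ i)
      rcases mul_eq_zero.1 this with h | h
      · exact absurd h (ne_of_gt (hui i))
      · exact h
    have h1 : (∑ i, ‖z i‖ ^ 2) = 0 := by
      apply Finset.sum_eq_zero; intro i _; rw [hz0' i]; ring
    rw [h1, Real.sqrt_zero]
    positivity
  · -- main case T > 0
    set b : ℝ := 4 * T / K with hbdef
    have hb : 0 < b := by positivity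
    set S : Finset (Fin n) := Finset.univ.filter (fun i => u i * b < ‖z i‖) with hSdef
    -- weighted cardinality bound
    have hScard : (∑ i ∈ S, (u i) ^ 2) ≤ K := by
      have step : b * (∑ i ∈ S, (u i) ^ 2) ≤ T := by
        rw [Finset.mul_sum]
        calc (∑ i ∈ S, b * (u i) ^ 2) ≤ ∑ i ∈ S, u i * ‖z i‖ := by
              apply Finset.sum_le_sum
              intro i hi
              have hiS : u i * b < ‖z i‖ := (Finset.mem_filter.1 hi).2
              have : b * (u i) ^ 2 = u i * (u i * b) := by ring
              rw [this]
              exact mul_le_mul_of_nonneg_left hiS.le (hui i).le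
          _ ≤ T := Finset.sum_le_sum_of_subset_of_nonneg (Finset.subset_univ S)
              (fun i _ _ => mul_nonneg (hui i).le (norm_nonneg _))
      have : (∑ i ∈ S, (u i) ^ 2) ≤ T / b := (le_div_iff₀ hb).2 (by linarith [step])
      have hTb : T / b = K / 4 := by
        rw [hbdef]; field_simp
      rw [hTb] at this
      linarith
    -- tail bound
    have hSc : (∑ i ∈ Sᶜ, ‖z i‖ ^ 2) ≤ b * T := by
      have h1 : (∑ i ∈ Sᶜ, ‖z i‖ ^ 2) ≤ ∑ i ∈ Sᶜ, b * (u i * ‖z i‖) := by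
        apply Finset.sum_le_sum
        intro i hi
        have hiSc : ¬ (u i * b < ‖z i‖) := by
          have := Finset.mem_compl.1 hi
          simpa [hSdef] using this
        push_neg at hiSc
        have : ‖z i‖ ^ 2 ≤ (u i * b) * ‖z i‖ := by
          calc ‖z i‖ ^ 2 = ‖z i‖ * ‖z i‖ := sq (‖z i‖) ▸ by ring
            _ ≤ (u i * b) * ‖z i‖ := mul_le_mul_of_nonneg_right hiSc (norm_nonneg _)
        linarith [this]
      have h2 : (∑ i ∈ Sᶜ, b * (u i * ‖z i‖)) ≤ b * T := by
        rw [← Finset.mul_sum]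
        apply mul_le_mul_of_nonneg_left _ hb.le
        exact Finset.sum_le_sum_of_subset_of_nonneg (Finset.subset_univ _)
          (fun i _ _ => mul_nonneg (hui i).le (norm_nonneg _))
      linarith
    have hScSqrt : Real.sqrt (∑ i ∈ Sᶜ, ‖z i‖ ^ 2) ≤ 2 * T / Real.sqrt K := by
      have hbT : b * T = (2 * T / Real.sqrt K) ^ 2 := by
        rw [hbdef]
        rw [div_pow, Real.sq_sqrt hK.le]
        field_simp
        ring
      calc Real.sqrt (∑ i ∈ Sᶜ, ‖z i‖ ^ 2) ≤ Real.sqrt ((2 * T / Real.sqrt K) ^ 2) :=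
            Real.sqrt_le_sqrt (by rw [← hbT]; exact hSc)
        _ = 2 * T / Real.sqrt K := Real.sqrt_sq (by positivity)
    -- head bound via NSP
    have hHead := hNSP z S hScard
    have hTail1 : (∑ i ∈ Sᶜ, u i * ‖z i‖) ≤ T :=
      Finset.sum_le_sum_of_subset_of_nonneg (Finset.subset_univ _)
        (fun i _ _ => mul_nonneg (hui i).le (norm_nonneg _))
    -- combine
    have hsplit : (∑ i, ‖z i‖ ^ 2) = (∑ i ∈ S, ‖z i‖ ^ 2) + (∑ i ∈ Sᶜ, ‖z i‖ ^ 2) :=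
      (Finset.sum_add_sum_compl S _).symm
    have hnn1 : 0 ≤ (∑ i ∈ S, ‖z i‖ ^ 2) := Finset.sum_nonneg fun i _ => sq_nonneg _
    have hnn2 : 0 ≤ (∑ i ∈ Sᶜ, ‖z i‖ ^ 2) := Finset.sum_nonneg fun i _ => sq_nonneg _
    calc Real.sqrt (∑ i, ‖z i‖ ^ 2)
        ≤ Real.sqrt (∑ i ∈ S, ‖z i‖ ^ 2) + Real.sqrt (∑ i ∈ Sᶜ, ‖z i‖ ^ 2) := by
          rw [hsplit]; exact sqrt_add_le' hnn1 hnn2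
      _ ≤ (ρ / Real.sqrt K * (∑ i ∈ Sᶜ, u i * ‖z i‖)
            + τ * Real.sqrt (∑ k, ‖(A.mulVec z) k‖ ^ 2)) + 2 * T / Real.sqrt K := by
          exact add_le_add hHead hScSqrt
      _ ≤ (2 + ρ) / Real.sqrt K * T + τ * Real.sqrt (∑ k, ‖(A.mulVec z) k‖ ^ 2) := by
          have h1 : ρ / Real.sqrt K * (∑ i ∈ Sᶜ, u i * ‖z i‖) ≤ ρ / Real.sqrt K * T :=
            mul_le_mul_of_nonneg_left hTail1 (by positivity)
          have h2 : ρ / Real.sqrt K * T + 2 * T / Real.sqrt K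
              = (2 + ρ) / Real.sqrt K * T := by field_simp; ring
          linarith
end

section
/- Suppose a matrix $M = [A\;I] \in \mathbb{C}^{m\times(n+p)}$ satisfies the 2-level weighted robust null space property of order $\bm{J}=(K,H)$ and scale $\lambda$ with constants $0 < \rho < 1$. Let $\bm{g} \in \mathbb{C}^{n+p}$ with $M\bm{g} = 0$, let $S \cup T$ be the quasi-best 2-level weighted support of $\bm{g}$ (with $\frac{3}{4}K \geq \|\bm{u}\|_\infty^2$ and $H \geq 2\|\bm{v}\|_\infty^2$), and set $\beta = \|\bm{g}_{(S\cup T)^c}\|_{1,\bm{w}_\lambda}/\sqrt{J_\lambda}$ with $J_\lambda = K + \lambda^2 H$ and $\Theta = \sqrt{J_\lambda}/\min\{\sqrt{K},\lambda\sqrt{H}\}$. Then $\|\bm{g}_{(S\cup T)^c}\|_2^2 \leq 4\rho\Theta\beta^2$ and consequently $\|\bm{g}\|_2 \leq \max\{\rho, 2\sqrt{\rho}\}(1 + \sqrt{\Theta})\,\beta$. -/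
/-!
Applied to `g` itself, where `M g = 0` removes the `τ`-term, the null space property bounds the
head: `‖g_{S ∪ T}‖₂ ≤ ρβ`. For `i ∉ S` the greedy order gives `|g_i| / u_i ≤ |g_j| / u_j` for all
`j ∈ S`, and maximality of `S` together with `u_i² ≤ 3K/4` gives `∑_S u_j² ≥ K/4`; hence
`|g_i| / u_i ≤ 2ρβ/√K` and `|g_i|² ≤ (2ρβ/√K) u_i |g_i|`. Summing, and doing the same on `T`,
the two weighted `ℓ¹` tails recombine into `√J_λ β`. The bound on `‖g‖₂` follows from
`√(a + b) ≤ √a + √b`.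
-/

open Finset

section QuasiBestSupport

variable {α : Type*} (w x : α → ℝ)

theorem Finset.sum_sq_le_mul_sum_mul_of_div_le (s : Finset α) {c : ℝ}
    (hw : ∀ i ∈ s, 0 < w i) (hx : ∀ i ∈ s, 0 ≤ x i) (h : ∀ i ∈ s, x i / w i ≤ c) :
    ∑ i ∈ s, x i ^ 2 ≤ c * ∑ i ∈ s, w i * x i := by
  rw [mul_sum]
  refine sum_le_sum fun i hi => ?_
  calc x i ^ 2 = x i / w i * (w i * x i) := by field_simp [(hw i hi).ne']
    _ ≤ c * (w i * x i) := by
      gcongr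
      · exact mul_nonneg (hw i hi).le (hx i hi)
      · exact h i hi

theorem div_le_div_sqrt_of_le_sum_sq {S : Finset α} {i : α} {L C : ℝ}
    (hwi : 0 < w i) (hxi : 0 ≤ x i) (hw : ∀ j ∈ S, 0 < w j)
    (hord : ∀ j ∈ S, x i / w i ≤ x j / w j) (hL : 0 < L) (hLS : L ≤ ∑ j ∈ S, w j ^ 2)
    (hS : √(∑ j ∈ S, x j ^ 2) ≤ C) :
    x i / w i ≤ C / √L := by
  set r := x i / w i
  have hr : 0 ≤ r := div_nonneg hxi hwi.le
  have hrS : r ^ 2 * L ≤ ∑ j ∈ S, x j ^ 2 :=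
    calc r ^ 2 * L ≤ ∑ j ∈ S, (r * w j) ^ 2 := by
          simp_rw [mul_pow, ← mul_sum]; gcongr
      _ ≤ ∑ j ∈ S, x j ^ 2 := sum_le_sum fun j hj => by
          have : r * w j ≤ x j := (le_div_iff₀ (hw j hj)).mp (hord j hj)
          gcongr
          exact mul_nonneg hr (hw j hj).le
  rw [le_div_iff₀ (Real.sqrt_pos.mpr hL)]
  calc r * √L = √(r ^ 2 * L) := by rw [Real.sqrt_mul (sq_nonneg r), Real.sqrt_sq hr]
    _ ≤ √(∑ j ∈ S, x j ^ 2) := Real.sqrt_le_sqrt hrS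
    _ ≤ C := hS

theorem sum_compl_sq_le_of_quasiBest [Fintype α] [DecidableEq α] {S : Finset α} {K C : ℝ}
    (hw : ∀ i, 0 < w i) (hx : ∀ i, 0 ≤ x i) (hK : 0 < K)
    (hwK : ∀ i ∉ S, w i ^ 2 ≤ 3 / 4 * K)
    (hSmax : ∀ i ∉ S, K < ∑ j ∈ S, w j ^ 2 + w i ^ 2)
    (hSord : ∀ i ∈ S, ∀ i' ∉ S, x i' / w i' ≤ x i / w i)
    (hS : √(∑ j ∈ S, x j ^ 2) ≤ C) :
    ∑ i ∈ Sᶜ, x i ^ 2 ≤ 2 * C / √K * ∑ i ∈ Sᶜ, w i * x i := by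
  refine Sᶜ.sum_sq_le_mul_sum_mul_of_div_le w x (fun i _ => hw i) (fun i _ => hx i)
    fun i hi => ?_
  have hiS := mem_compl.mp hi
  have hquarter : K / 4 ≤ ∑ j ∈ S, w j ^ 2 := by linarith [hSmax i hiS, hwK i hiS]
  have hsqrt : √(K / 4) = √K / 2 := by
    rw [Real.sqrt_div' _ (by norm_num : (0 : ℝ) ≤ 4), show (4 : ℝ) = 2 ^ 2 by norm_num,
      Real.sqrt_sq zero_le_two]
  calc x i / w i ≤ C / √(K / 4) :=
        div_le_div_sqrt_of_le_sum_sq w x (hw i) (hx i) (fun j _ => hw j)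
          (fun j hj => hSord j hj i hiS) (by positivity) hquarter hS
    _ = 2 * C / √K := by rw [hsqrt]; field_simp

end QuasiBestSupport

theorem div_mul_add_div_mul_le_div_min_mul {s t c p q : ℝ} (hs : 0 < s) (ht : 0 < t)
    (hc : 0 ≤ c) (hp : 0 ≤ p) (hq : 0 ≤ q) :
    c / s * p + c / t * q ≤ c / min s t * (p + q) := by
  have hm : 0 < min s t := lt_min hs ht
  rw [mul_add]
  gcongr
  · exact min_le_left s t
  · exact min_le_right s t

theorem add_le_four_mul_div_min_mul_sq {x y p q K H lam ρ β s : ℝ} (hK : 0 < K) (hH : 0 < H)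
    (hlam : 0 < lam) (hρ : 0 ≤ ρ) (hβ : 0 ≤ β) (hs : 0 ≤ s) (hp : 0 ≤ p) (hq : 0 ≤ q)
    (hpq : p + lam * q = β * s) (hx : x ≤ 2 * (ρ * β) / √K * p)
    (hy : y ≤ 2 * (ρ * β) / √H * q) :
    x + y ≤ 4 * ρ * (s / min √K (lam * √H)) * β ^ 2 := by
  have hy' : y ≤ 2 * (ρ * β) / (lam * √H) * (lam * q) := by
    convert hy using 1
    field_simp
  calc x + y ≤ 2 * (ρ * β) / √K * p + 2 * (ρ * β) / (lam * √H) * (lam * q) := add_le_add hx hy'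
    _ ≤ 2 * (ρ * β) / min √K (lam * √H) * (p + lam * q) :=
        div_mul_add_div_mul_le_div_min_mul (by positivity) (by positivity) (by positivity)
          hp (by positivity)
    _ = 2 * ρ * (s / min √K (lam * √H)) * β ^ 2 := by rw [hpq]; ring
    _ ≤ 4 * ρ * (s / min √K (lam * √H)) * β ^ 2 := by gcongr; norm_num

theorem sqrt_add_le_max_mul_one_add_sqrt {a b ρ Θ β : ℝ} (hρ : 0 ≤ ρ) (hΘ : 0 ≤ Θ)
    (hβ : 0 ≤ β) (ha : a ≤ (ρ * β) ^ 2) (hb : b ≤ 4 * ρ * Θ * β ^ 2) :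
    √(a + b) ≤ max ρ (2 * √ρ) * (1 + √Θ) * β := by
  have hsum : a + b ≤ (ρ * β + 2 * √ρ * √Θ * β) ^ 2 := by
    have h4 : (2 * √ρ * √Θ * β) ^ 2 = 4 * ρ * Θ * β ^ 2 := by
      rw [mul_pow, mul_pow, mul_pow, Real.sq_sqrt hρ, Real.sq_sqrt hΘ]; ring
    nlinarith [mul_nonneg (mul_nonneg hρ hβ) (mul_nonneg (Real.sqrt_nonneg ρ)
      (mul_nonneg (Real.sqrt_nonneg Θ) hβ))]
  calc √(a + b) ≤ ρ * β + 2 * √ρ * √Θ * β :=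
        Real.sqrt_le_iff.mpr ⟨by positivity, hsum⟩
    _ ≤ max ρ (2 * √ρ) * β + max ρ (2 * √ρ) * √Θ * β := by
        gcongr
        · exact le_max_left _ _
        · exact le_max_right _ _
    _ = max ρ (2 * √ρ) * (1 + √Θ) * β := by ring

theorem wladlasso_l2_tail_bound_general {m n : ℕ} (A : Matrix (Fin m) (Fin n) ℂ)
    (u : Fin n → ℝ) (v : Fin m → ℝ)
    (hu : ∀ i, 1 ≤ u i) (hv : ∀ j, 1 ≤ v j)
    (K H lam ρ τ : ℝ) (hK : 0 < K) (hH : 0 < H) (hlam : 0 < lam)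
    (hρ0 : 0 < ρ)
    (hKu : ∀ i, (u i) ^ 2 ≤ 3 / 4 * K)
    (hHv : ∀ j, 2 * (v j) ^ 2 ≤ H)
    (hNSP : ∀ z : Fin n ⊕ Fin m → ℂ, ∀ S1 : Finset (Fin n), ∀ S2 : Finset (Fin m),
      (∑ i ∈ S1, (u i) ^ 2) ≤ K → (∑ j ∈ S2, (v j) ^ 2) ≤ H →
      Real.sqrt ((∑ i ∈ S1, ‖z (Sum.inl i)‖ ^ 2) + ∑ j ∈ S2, ‖z (Sum.inr j)‖ ^ 2) ≤
        ρ / Real.sqrt (K + lam ^ 2 * H) *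
            ((∑ i ∈ S1ᶜ, u i * ‖z (Sum.inl i)‖) + lam * ∑ j ∈ S2ᶜ, v j * ‖z (Sum.inr j)‖)
          + τ * Real.sqrt (∑ k, ‖((Matrix.fromCols A 1).mulVec z) k‖ ^ 2))
    (g : Fin n ⊕ Fin m → ℂ)
    (hg : (Matrix.fromCols A (1 : Matrix (Fin m) (Fin m) ℂ)).mulVec g = 0)
    (S : Finset (Fin n)) (T : Finset (Fin m))
    (hScard : (∑ i ∈ S, (u i) ^ 2) ≤ K)
    (hSmax : ∀ i ∉ S, K < (∑ i' ∈ S, (u i') ^ 2) + (u i) ^ 2)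
    (hSord : ∀ i ∈ S, ∀ i' ∉ S, ‖g (Sum.inl i')‖ / u i' ≤ ‖g (Sum.inl i)‖ / u i)
    (hTcard : (∑ j ∈ T, (v j) ^ 2) ≤ H)
    (hTmax : ∀ j ∉ T, H < (∑ j' ∈ T, (v j') ^ 2) + (v j) ^ 2)
    (hTord : ∀ j ∈ T, ∀ j' ∉ T, ‖g (Sum.inr j')‖ / v j' ≤ ‖g (Sum.inr j)‖ / v j) :
    (∑ i ∈ Sᶜ, ‖g (Sum.inl i)‖ ^ 2) + (∑ j ∈ Tᶜ, ‖g (Sum.inr j)‖ ^ 2) ≤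
      4 * ρ * (Real.sqrt (K + lam ^ 2 * H) / min (Real.sqrt K) (lam * Real.sqrt H)) *
        (((∑ i ∈ Sᶜ, u i * ‖g (Sum.inl i)‖) + lam * ∑ j ∈ Tᶜ, v j * ‖g (Sum.inr j)‖) /
            Real.sqrt (K + lam ^ 2 * H)) ^ 2 ∧
    Real.sqrt (∑ k, ‖g k‖ ^ 2) ≤
      max ρ (2 * Real.sqrt ρ) *
        (1 + Real.sqrt (Real.sqrt (K + lam ^ 2 * H) / min (Real.sqrt K) (lam * Real.sqrt H))) *
        (((∑ i ∈ Sᶜ, u i * ‖g (Sum.inl i)‖) + lam * ∑ j ∈ Tᶜ, v j * ‖g (Sum.inr j)‖) /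
          Real.sqrt (K + lam ^ 2 * H)) := by
  set a := ∑ i ∈ S, ‖g (Sum.inl i)‖ ^ 2
  set b := ∑ j ∈ T, ‖g (Sum.inr j)‖ ^ 2
  set p := ∑ i ∈ Sᶜ, u i * ‖g (Sum.inl i)‖
  set q := ∑ j ∈ Tᶜ, v j * ‖g (Sum.inr j)‖
  set β := (p + lam * q) / √(K + lam ^ 2 * H)
  have hupos i : 0 < u i := one_pos.trans_le (hu i)
  have hvpos j : 0 < v j := one_pos.trans_le (hv j)
  have hp : 0 ≤ p := sum_nonneg fun i _ => mul_nonneg (hupos i).le (norm_nonneg _)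
  have hq : 0 ≤ q := sum_nonneg fun j _ => mul_nonneg (hvpos j).le (norm_nonneg _)
  have hβ : 0 ≤ β := by positivity
  have hhead : √(a + b) ≤ ρ * β := by
    have := hNSP g S T hScard hTcard
    simp only [hg, Pi.zero_apply, norm_zero, zero_pow two_ne_zero, sum_const_zero,
      Real.sqrt_zero, mul_zero, add_zero] at this
    exact this.trans_eq (by ring)
  have htailS := sum_compl_sq_le_of_quasiBest u (fun i => ‖g (Sum.inl i)‖) hupos
    (fun _ => norm_nonneg _) hK (fun i _ => hKu i) hSmax hSord
    ((Real.sqrt_le_sqrt (le_add_of_nonneg_right (by positivity))).trans hhead)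
  have htailT := sum_compl_sq_le_of_quasiBest v (fun j => ‖g (Sum.inr j)‖) hvpos
    (fun _ => norm_nonneg _) hH (fun j _ => by linarith [hHv j]) hTmax hTord
    ((Real.sqrt_le_sqrt (le_add_of_nonneg_left (by positivity))).trans hhead)
  have htail := add_le_four_mul_div_min_mul_sq hK hH hlam hρ0.le hβ (by positivity) hp hq
    (div_mul_cancel₀ _ (by positivity)).symm htailS htailT
  refine ⟨htail, ?_⟩
  rw [Fintype.sum_sum_type, ← sum_add_sum_compl S, ← sum_add_sum_compl T,
    add_add_add_comm]
  exact sqrt_add_le_max_mul_one_add_sqrt hρ0.le (by positivity) hβ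
    ((Real.sqrt_le_left (by positivity)).mp hhead) htail

/-- `ℓ²` tail bound in the WLAD-LASSO recovery analysis. For `M = [A I]` satisfying the
2-level weighted robust null space property of order `(K, H)` and scale `λ`, any `g` with
`M g = 0`, and `S ∪ T` the quasi-best 2-level weighted support of `g`, setting
`β = ‖g_{(S∪T)ᶜ}‖_{1,w_λ}/√J_λ` and `Θ = √J_λ / min(√K, λ√H)`, one has
`‖g_{(S∪T)ᶜ}‖₂² ≤ 4ρΘβ²` and `‖g‖₂ ≤ max(ρ, 2√ρ)(1+√Θ)β`. -/
theorem wladlasso_l2_tail_bound {m n : ℕ} (A : Matrix (Fin m) (Fin n) ℂ)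
    (u : Fin n → ℝ) (v : Fin m → ℝ)
    (hu : ∀ i, 1 ≤ u i) (hv : ∀ j, 1 ≤ v j)
    (K H lam ρ τ : ℝ) (hK : 0 < K) (hH : 0 < H) (hlam : 0 < lam)
    (hρ0 : 0 < ρ) (hρ1 : ρ < 1) (hτ : 0 < τ)
    (hKu : ∀ i, (u i) ^ 2 ≤ 3 / 4 * K)
    (hHv : ∀ j, 2 * (v j) ^ 2 ≤ H)
    (hNSP : ∀ z : Fin n ⊕ Fin m → ℂ, ∀ S1 : Finset (Fin n), ∀ S2 : Finset (Fin m),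
      (∑ i ∈ S1, (u i) ^ 2) ≤ K → (∑ j ∈ S2, (v j) ^ 2) ≤ H →
      Real.sqrt ((∑ i ∈ S1, ‖z (Sum.inl i)‖ ^ 2) + ∑ j ∈ S2, ‖z (Sum.inr j)‖ ^ 2) ≤
        ρ / Real.sqrt (K + lam ^ 2 * H) *
            ((∑ i ∈ S1ᶜ, u i * ‖z (Sum.inl i)‖) + lam * ∑ j ∈ S2ᶜ, v j * ‖z (Sum.inr j)‖)
          + τ * Real.sqrt (∑ k, ‖((Matrix.fromCols A 1).mulVec z) k‖ ^ 2))
    (g : Fin n ⊕ Fin m → ℂ)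
    (hg : (Matrix.fromCols A (1 : Matrix (Fin m) (Fin m) ℂ)).mulVec g = 0)
    (S : Finset (Fin n)) (T : Finset (Fin m))
    (hScard : (∑ i ∈ S, (u i) ^ 2) ≤ K)
    (hSmax : ∀ i ∉ S, K < (∑ i' ∈ S, (u i') ^ 2) + (u i) ^ 2)
    (hSord : ∀ i ∈ S, ∀ i' ∉ S, ‖g (Sum.inl i')‖ / u i' ≤ ‖g (Sum.inl i)‖ / u i)
    (hTcard : (∑ j ∈ T, (v j) ^ 2) ≤ H)
    (hTmax : ∀ j ∉ T, H < (∑ j' ∈ T, (v j') ^ 2) + (v j) ^ 2)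
    (hTord : ∀ j ∈ T, ∀ j' ∉ T, ‖g (Sum.inr j')‖ / v j' ≤ ‖g (Sum.inr j)‖ / v j) :
    (∑ i ∈ Sᶜ, ‖g (Sum.inl i)‖ ^ 2) + (∑ j ∈ Tᶜ, ‖g (Sum.inr j)‖ ^ 2) ≤
      4 * ρ * (Real.sqrt (K + lam ^ 2 * H) / min (Real.sqrt K) (lam * Real.sqrt H)) *
        (((∑ i ∈ Sᶜ, u i * ‖g (Sum.inl i)‖) + lam * ∑ j ∈ Tᶜ, v j * ‖g (Sum.inr j)‖) /
            Real.sqrt (K + lam ^ 2 * H)) ^ 2 ∧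
    Real.sqrt (∑ k, ‖g k‖ ^ 2) ≤
      max ρ (2 * Real.sqrt ρ) *
        (1 + Real.sqrt (Real.sqrt (K + lam ^ 2 * H) / min (Real.sqrt K) (lam * Real.sqrt H))) *
        (((∑ i ∈ Sᶜ, u i * ‖g (Sum.inl i)‖) + lam * ∑ j ∈ Tᶜ, v j * ‖g (Sum.inr j)‖) /
          Real.sqrt (K + lam ^ 2 * H)) :=
  wladlasso_l2_tail_bound_general A u v hu hv K H lam ρ τ hK hH hlam hρ0 hKu hHv hNSP g hg S T
    hScard hSmax hSord hTcard hTmax hTord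
end
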